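/- Let H1 be a hypergraph, let C_p be an [M_p]-component of H1, let M_r ⊆ Fr(C_p), let C_r be an [M_r]-component of H1 such that C_p ∪ C_r is [M_p ∩ M_r]-connected, and let M_s ⊆ Fr(C_r). Define ED = (M_r ∩ Fr(C_r)) \ M_s, set M_r' = M_r \ ED, and let C_r' be the [M_r']-component of H1 containing C_r ∪ ED. Then a set C is an [M_s]-component of H1 such that C_r ∪ C is [M_r ∩ M_s]-connected if, and only if, C is an [M_s]-component of H1 such that C_r' ∪ C is [M_r' ∩ M_s]-connected. -/

import Mathlib

/-! Common definitions: hypergraphs, components, the Robber and Captain game,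
the Robber and Marshal game, tree projections, (generalized) hypertree decompositions. -/

variable {α : Type} [DecidableEq α]

/-- A hypergraph: a finite set of nodes and a finite set of hyperedges, each a subset of the
nodes, such that every node occurs in some hyperedge. -/
structure FinHypergraph (α : Type) [DecidableEq α] where
  nodes : Finset α
  edges : Finset (Finset α)
  edge_sub : ∀ h ∈ edges, h ⊆ nodes
  cover : ∀ x ∈ nodes, ∃ h ∈ edges, x ∈ h

namespace FinHypergraph

/-- `X` and `Y` are `[M]`-adjacent: some hyperedge `h` satisfies `{X,Y} ⊆ h \ M`. -/
def MAdj (H : FinHypergraph α) (M : Finset α) (X Y : α) : Prop :=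
  ∃ h ∈ H.edges, X ∈ h ∧ Y ∈ h ∧ X ∉ M ∧ Y ∉ M

/-- An `[M]`-path: a sequence of consecutively `[M]`-adjacent nodes. -/
def MPath (H : FinHypergraph α) (M : Finset α) : α → α → Prop :=
  Relation.ReflTransGen (H.MAdj M)

/-- `W` is `[M]`-connected: every two nodes of `W` are joined by an `[M]`-path. -/
def MConn (H : FinHypergraph α) (M W : Finset α) : Prop :=
  ∀ X ∈ W, ∀ Y ∈ W, H.MPath M X Y

/-- `C` is an `[M]`-component: a maximal `[M]`-connected nonempty subset of `nodes(H) \ M`. -/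
def MComp (H : FinHypergraph α) (M C : Finset α) : Prop :=
  C.Nonempty ∧ C ⊆ H.nodes \ M ∧ H.MConn M C ∧
    ∀ C' : Finset α, C ⊆ C' → C' ⊆ H.nodes \ M → H.MConn M C' → C' = C

/-- The frontier `Fr(C)`: the union of all hyperedges of `H` meeting `C`. -/
def Fr (H : FinHypergraph α) (C : Finset α) : Finset α :=
  (H.edges.filter fun h => (h ∩ C).Nonempty).sup id

/-- The border `∂C = Fr(C) \ C`. -/
def border (H : FinHypergraph α) (C : Finset α) : Finset α := H.Fr C \ C

/-- `H1 ≤ H2`: every hyperedge of `H1` is contained in some hyperedge of `H2`. -/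
def HLE (H1 H2 : FinHypergraph α) : Prop := ∀ h ∈ H1.edges, ∃ h' ∈ H2.edges, h ⊆ h'

/-- `H` is acyclic iff it has a join tree: a tree on the hyperedges of `H` such that, for every
node `X`, the set of hyperedges containing `X` induces a connected subtree. -/
def IsAcyclicHG (H : FinHypergraph α) : Prop :=
  ∃ T : SimpleGraph {h : Finset α // h ∈ H.edges},
    T.IsTree ∧ ∀ X ∈ H.nodes,
      (T.induce {e : {h : Finset α // h ∈ H.edges} | X ∈ e.1}).Connected

/-- `H^k`: the hypergraph over the same nodes whose hyperedges are all unions of at most `k`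
(and at least one) hyperedges of `H`. -/
def pow (H : FinHypergraph α) (k : ℕ) (hk : 1 ≤ k) : FinHypergraph α where
  nodes := H.nodes
  edges := (H.edges.powerset.filter fun S => S.Nonempty ∧ S.card ≤ k).image fun S => S.sup id
  edge_sub := by
    intro h hh
    simp only [Finset.mem_image, Finset.mem_filter, Finset.mem_powerset] at hh
    obtain ⟨S, ⟨hS, _, _⟩, rfl⟩ := hh
    exact Finset.sup_le fun i hi => H.edge_sub i (hS hi)
  cover := by
    intro x hx
    obtain ⟨h, hh, hxh⟩ := H.cover x hx
    refine ⟨h, ?_, hxh⟩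
    simp only [Finset.mem_image, Finset.mem_filter, Finset.mem_powerset]
    exact ⟨{h}, ⟨Finset.singleton_subset_iff.mpr hh, Finset.singleton_nonempty h,
      by simpa using hk⟩, by simp⟩

/-- The simplicial version of `H`: same nodes, and hyperedges all nonempty subsets of
hyperedges of `H`. -/
def simplicial (H : FinHypergraph α) : FinHypergraph α where
  nodes := H.nodes
  edges := (H.edges.biUnion Finset.powerset).filter fun s => s.Nonempty
  edge_sub := by
    intro h hh
    simp only [Finset.mem_filter, Finset.mem_biUnion, Finset.mem_powerset] at hh
    obtain ⟨⟨e, he, hsub⟩, -⟩ := hh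
    exact hsub.trans (H.edge_sub e he)
  cover := by
    intro x hx
    obtain ⟨h, hh, hxh⟩ := H.cover x hx
    refine ⟨h, ?_, hxh⟩
    simp only [Finset.mem_filter, Finset.mem_biUnion, Finset.mem_powerset]
    exact ⟨⟨h, hh, le_refl _⟩, ⟨x, hxh⟩⟩

end FinHypergraph

/-- A tree projection of `H1` with respect to `H2`: an acyclic hypergraph `Ha` over the nodes
of `H1` with `H1 ≤ Ha ≤ H2`. -/
def IsTreeProjection (Ha H1 H2 : FinHypergraph α) : Prop :=
  Ha.nodes = H1.nodes ∧ Ha.IsAcyclicHG ∧ FinHypergraph.HLE H1 Ha ∧ FinHypergraph.HLE Ha H2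

def HasTreeProjection (H1 H2 : FinHypergraph α) : Prop := ∃ Ha, IsTreeProjection Ha H1 H2

/-! ### The Robber and Captain game -/

/-- A configuration `(h, M, C)`. -/
abbrev Config (α : Type) := Finset α × Finset α × Finset α

/-- The initial configuration `(∅, ∅, nodes(H1))`. -/
def initConfig (H1 : FinHypergraph α) : Config α := (∅, ∅, H1.nodes)

/-- `Cr` is a `[v, Mr]`-option: an `[Mr]`-component `Cr` of `H1` such that `C ∪ Cr` is
`[M ∩ Mr]`-connected, where `v = (h, M, C)`. -/
def IsOption (H1 : FinHypergraph α) (v : Config α) (Mr Cr : Finset α) : Prop :=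
  H1.MComp Mr Cr ∧ H1.MConn (v.2.1 ∩ Mr) (v.2.2 ∪ Cr)

/-- The successor relation of the strategy graph (arcs from a configuration in the domain to the
configurations resulting from the Captain's move and the Robber's choice of an option). -/
def StratSucc (H1 : FinHypergraph α) (dom : Set (Config α))
    (mv : Config α → Finset α × Finset α) (a b : Config α) : Prop :=
  a ∈ dom ∧ b.1 = (mv a).1 ∧ b.2.1 = (mv a).2 ∧ IsOption H1 a (mv a).2 b.2.2

/-- A strategy for the Captain in the Robber and Captain game on `(H1, H2)`. -/
structure Strategy (H1 H2 : FinHypergraph α) where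
  dom : Set (Config α)
  move : Config α → Finset α × Finset α
  init_mem : initConfig H1 ∈ dom
  valid : ∀ v ∈ dom, v = initConfig H1 ∨
    (v.1 ∈ H2.edges ∧ v.2.1 ⊆ v.1 ∧ H1.MComp v.2.1 v.2.2)
  move_edge : ∀ v ∈ dom, (move v).1 ∈ H2.edges
  move_sub : ∀ v ∈ dom, (move v).2 ⊆ (move v).1 ∩ H1.Fr v.2.2
  closed : ∀ v ∈ dom, ∀ Cr : Finset α,
    IsOption H1 v (move v).2 Cr → ((move v).1, (move v).2, Cr) ∈ dom
  reach : ∀ v ∈ dom, Relation.ReflTransGen (StratSucc H1 dom move) (initConfig H1) v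

namespace Strategy

variable {H1 H2 : FinHypergraph α}

/-- The arc relation of the strategy graph `G(σ)`. -/
def Succ (σ : Strategy H1 H2) : Config α → Config α → Prop :=
  StratSucc H1 σ.dom σ.move

/-- `σ` is winning iff its strategy graph is acyclic. -/
def Winning (σ : Strategy H1 H2) : Prop :=
  ∀ v : Config α, ¬ Relation.TransGen σ.Succ v v

/-- `σ` is monotone: every move is monotone, i.e. every option shrinks the component. -/
def IsMonotone (σ : Strategy H1 H2) : Prop :=
  ∀ v ∈ σ.dom, ∀ Cr : Finset α, IsOption H1 v (σ.move v).2 Cr → Cr ⊆ v.2.2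

/-- `σ` is greedy: at `v = (h_p, M_p, C_p)` the move `(h_r, M_r)` satisfies
`M_r = h_r ∩ Fr(C_p)`, with `h_r = h_p` whenever `h_p ∩ C_p ≠ ∅` (otherwise `h_r` is an
arbitrary hyperedge of `H2`, which is guaranteed by `move_edge`). -/
def Greedy (σ : Strategy H1 H2) : Prop :=
  ∀ v ∈ σ.dom, (σ.move v).2 = (σ.move v).1 ∩ H1.Fr v.2.2 ∧
    ((v.1 ∩ v.2.2).Nonempty → (σ.move v).1 = v.1)

/-- `σ` is nice: `σ(h_p, M_p, C_p) = (h_p, ∂C_p)` whenever `∂C_p ⊂ M_p`. -/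
def Nice (σ : Strategy H1 H2) : Prop :=
  ∀ v ∈ σ.dom, H1.border v.2.2 ⊂ v.2.1 → σ.move v = (v.1, H1.border v.2.2)

end Strategy

/-! ### The Robber and Marshal game -/

/-- A configuration `(h, C)` of the Robber and Marshal game. -/
abbrev MConfig (α : Type) := Finset α × Finset α

/-- The Robber's options in the Robber and Marshal game: `Cr` is an `[hr]`-component such that
`C ∪ Cr` is `[h ∩ hr]`-connected, where `v = (h, C)`. -/
def MarshalOption (H1 : FinHypergraph α) (v : MConfig α) (hr Cr : Finset α) : Prop :=
  H1.MComp hr Cr ∧ H1.MConn (v.1 ∩ hr) (v.2 ∪ Cr)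

/-- The successor relation of the Robber and Marshal game under a given Marshal strategy. -/
def MarSucc (H1 : FinHypergraph α) (dom : Set (MConfig α)) (mv : MConfig α → Finset α)
    (a b : MConfig α) : Prop :=
  a ∈ dom ∧ ¬ a.2 ⊆ a.1 ∧ b.1 = mv a ∧
    (MarshalOption H1 a (mv a) b.2 ∨
      ((¬ ∃ Cr : Finset α, MarshalOption H1 a (mv a) Cr) ∧ b.2 = ∅))

/-- A strategy for the Marshal in the Robber and Marshal game on `(H1, H2)`.
A configuration `(h, C)` with `C ⊆ h` is a capture configuration; at any other configuration of
the domain the Marshal moves to a hyperedge of `H2`. -/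
structure MarshalStrategy (H1 H2 : FinHypergraph α) where
  dom : Set (MConfig α)
  move : MConfig α → Finset α
  init_mem : (∅, H1.nodes) ∈ dom
  valid : ∀ v ∈ dom, v = ((∅ : Finset α), H1.nodes) ∨
    (v.1 ∈ H2.edges ∧ (H1.MComp v.1 v.2 ∨ v.2 = ∅))
  move_edge : ∀ v ∈ dom, ¬ v.2 ⊆ v.1 → move v ∈ H2.edges
  closed : ∀ v ∈ dom, ¬ v.2 ⊆ v.1 → ∀ Cr : Finset α,
    MarshalOption H1 v (move v) Cr → (move v, Cr) ∈ dom
  closed_cap : ∀ v ∈ dom, ¬ v.2 ⊆ v.1 →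
    (¬ ∃ Cr : Finset α, MarshalOption H1 v (move v) Cr) → ((move v, ∅) : MConfig α) ∈ dom
  reach : ∀ v ∈ dom,
    Relation.ReflTransGen (MarSucc H1 dom move) ((∅ : Finset α), H1.nodes) v

namespace MarshalStrategy

variable {H1 H2 : FinHypergraph α}

/-- The Marshal wins: starting from the initial configuration the game always ends in a capture
configuration; equivalently, the game graph of the strategy is acyclic. -/
def Winning (μ : MarshalStrategy H1 H2) : Prop :=
  ∀ v : MConfig α, ¬ Relation.TransGen (MarSucc H1 μ.dom μ.move) v v

/-- The Marshal strategy is monotone: in every move, every available component shrinks. -/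
def IsMonotone (μ : MarshalStrategy H1 H2) : Prop :=
  ∀ v ∈ μ.dom, ¬ v.2 ⊆ v.1 → ∀ Cr : Finset α, MarshalOption H1 v (μ.move v) Cr → Cr ⊆ v.2

end MarshalStrategy

/-! ### Rooted trees and (generalized) hypertree decompositions -/

/-- A finite rooted tree, encoded by a parent function on `Fin (size+1)`. -/
structure RTree where
  size : ℕ
  parent : Fin (size + 1) → Fin (size + 1)
  root : Fin (size + 1)
  parent_root : parent root = root
  reach_root : ∀ v, ∃ m : ℕ, parent^[m] v = root

namespace RTree

/-- Adjacency in the rooted tree. -/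
def Adj (T : RTree) (a b : Fin (T.size + 1)) : Prop :=
  a ≠ b ∧ (T.parent a = b ∨ T.parent b = a)

/-- A set of vertices induces a connected subtree. -/
def ConnIn (T : RTree) (S : Set (Fin (T.size + 1))) : Prop :=
  ∀ a ∈ S, ∀ b ∈ S,
    Relation.ReflTransGen (fun x y => T.Adj x y ∧ x ∈ S ∧ y ∈ S) a b

/-- `q` is a vertex of the subtree rooted at `p` (i.e. a descendant of `p`). -/
def Desc (T : RTree) (p q : Fin (T.size + 1)) : Prop :=
  ∃ m : ℕ, T.parent^[m] q = p

end RTree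

/-- A generalized hypertree decomposition of `H`. -/
structure GHDec (H : FinHypergraph α) where
  T : RTree
  chi : Fin (T.size + 1) → Finset α
  lam : Fin (T.size + 1) → Finset (Finset α)
  chi_sub : ∀ p, chi p ⊆ H.nodes
  lam_sub : ∀ p, lam p ⊆ H.edges
  edge_cover : ∀ h ∈ H.edges, ∃ p, h ⊆ chi p
  conn : ∀ Y ∈ H.nodes, T.ConnIn {p | Y ∈ chi p}
  chi_cov : ∀ p, chi p ⊆ (lam p).sup id

namespace GHDec

variable {H : FinHypergraph α}

/-- The decomposition has width at most `k`. -/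
def WidthLE (D : GHDec H) (k : ℕ) : Prop := ∀ p, (D.lam p).card ≤ k

/-- Condition (4) of hypertree decompositions: for every vertex `p`, the intersection of
`⋃ λ(p)` with `⋃_{q in the subtree rooted at p} χ(q)` is contained in `χ(p)`. -/
def IsHD (D : GHDec H) : Prop :=
  ∀ p, ∀ x ∈ (D.lam p).sup id, (∃ q, D.T.Desc p q ∧ x ∈ D.chi q) → x ∈ D.chi p

end GHDec

namespace FinHypergraph

variable {H : FinHypergraph α} {M M' W W' : Finset α}

theorem MAdj.symm {X Y : α} : H.MAdj M X Y → H.MAdj M Y X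
  | ⟨h, hh, hX, hY, hXM, hYM⟩ => ⟨h, hh, hY, hX, hYM, hXM⟩

instance : Std.Symm (H.MAdj M) := ⟨fun _ _ => MAdj.symm⟩

theorem MPath.symm {X Y : α} (hp : H.MPath M X Y) : H.MPath M Y X :=
  Std.Symm.symm (r := Relation.ReflTransGen (H.MAdj M)) _ _ hp

theorem MPath.anti (hM : M ⊆ M') {X Y : α} (hp : H.MPath M' X Y) : H.MPath M X Y :=
  Relation.ReflTransGen.mono (fun _ _ ⟨h, hh, hX, hY, hXM, hYM⟩ =>
    ⟨h, hh, hX, hY, (hXM <| hM ·), (hYM <| hM ·)⟩) _ _ hp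

theorem MConn.anti (hM : M ⊆ M') (hW : H.MConn M' W) : H.MConn M W :=
  fun X hX Y hY => (hW X hX Y hY).anti hM

theorem MConn.mono (hWW' : W ⊆ W') (hW' : H.MConn M W') : H.MConn M W :=
  fun X hX Y hY => hW' X (hWW' hX) Y (hWW' hY)

theorem MConn.union (hW : H.MConn M W) (hW' : H.MConn M W') (hne : (W ∩ W').Nonempty) :
    H.MConn M (W ∪ W') := by
  obtain ⟨Z, hZ⟩ := hne
  rw [Finset.mem_inter] at hZ
  have toZ : ∀ X ∈ W ∪ W', H.MPath M X Z := by
    intro X hX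
    rcases Finset.mem_union.mp hX with hX | hX
    · exact hW X hX Z hZ.1
    · exact hW' X hX Z hZ.2
  exact fun X hX Y hY => (toZ X hX).trans (toZ Y hY).symm

end FinHypergraph

open Finset in
theorem options_after_unchanged_general {α : Type} [DecidableEq α] (H1 : FinHypergraph α)
    (Mr Cr Ms : Finset α)
    (hCr : H1.MComp Mr Cr)
    (ED Mr' Cr' : Finset α)
    (hED : ED = (Mr ∩ H1.Fr Cr) \ Ms) (hMr' : Mr' = Mr \ ED)
    (hCr' : H1.MComp Mr' Cr') (hsub : Cr ∪ ED ⊆ Cr') :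
    ∀ C : Finset α,
      (H1.MComp Ms C ∧ H1.MConn (Mr ∩ Ms) (Cr ∪ C)) ↔
        (H1.MComp Ms C ∧ H1.MConn (Mr' ∩ Ms) (Cr' ∪ C)) := by
  have hM : Mr' ∩ Ms = Mr ∩ Ms := by
    rw [hMr', hED, sdiff_inter_right_comm,
      sdiff_eq_self_of_disjoint (disjoint_sdiff.mono_left inter_subset_right)]
  have hCr_sub : Cr ⊆ Cr' := subset_union_left.trans hsub
  intro C
  rw [hM]
  refine and_congr_right fun _ => ⟨fun hconn => ?_, (·.mono (union_subset_union_left hCr_sub))⟩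
  have hCr'_conn : H1.MConn (Mr ∩ Ms) Cr' := hCr'.2.2.1.anti (hM ▸ inter_subset_left)
  have hmeet : (Cr' ∩ (Cr ∪ C)).Nonempty :=
    hCr.1.mono (subset_inter hCr_sub subset_union_left)
  exact (hCr'_conn.union hconn hmeet).mono (union_subset_union_right subset_union_right)

/-- Lemma, part (4): with `ED = (M_r ∩ Fr(C_r)) \ M_s`, `M_r' = M_r \ ED` and
`C_r'` the `[M_r']`-component containing `C_r ∪ ED`, a set `C` is an `[M_s]`-component with
`C_r ∪ C` being `[M_r ∩ M_s]`-connected iff `C` is an `[M_s]`-component with `C_r' ∪ C` being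
`[M_r' ∩ M_s]`-connected. -/
theorem options_after_unchanged {α : Type} [DecidableEq α] (H1 : FinHypergraph α)
    (Mp Cp Mr Cr Ms : Finset α)
    (hCp : H1.MComp Mp Cp) (hMr : Mr ⊆ H1.Fr Cp)
    (hCr : H1.MComp Mr Cr) (hc : H1.MConn (Mp ∩ Mr) (Cp ∪ Cr))
    (hMs : Ms ⊆ H1.Fr Cr)
    (ED Mr' Cr' : Finset α)
    (hED : ED = (Mr ∩ H1.Fr Cr) \ Ms) (hMr' : Mr' = Mr \ ED)
    (hCr' : H1.MComp Mr' Cr') (hsub : Cr ∪ ED ⊆ Cr') :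
    ∀ C : Finset α,
      (H1.MComp Ms C ∧ H1.MConn (Mr ∩ Ms) (Cr ∪ C)) ↔
        (H1.MComp Ms C ∧ H1.MConn (Mr' ∩ Ms) (Cr' ∪ C)) :=
  options_after_unchanged_general H1 Mr Cr Ms hCr ED Mr' Cr' hED hMr' hCr' hsub
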